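/- Consider the three-item all-pay auction with common item values v_1 ≥ v_2 ≥ v_3 > 0 and budgets satisfying B_i ≥ max{(v_1 + v_2 + v_3)/2, v_1} for both i ∈ {1,2}, and suppose (v_1 + v_2 + v_3)/2 ≤ v_1. Define the points A = (v_1, 0, 0) and B = (0, v_2, v_3) in ℝ³. Then the strategy profile in which each player i ∈ {1,2} plays the uniform distribution on the segment AB is a Nash equilibrium. -/

import Mathlib

/-!
Against the segment strategy the opponent's bid on item `j` is uniform on `[0, v j]` (decreasing
along the segment on item `0`, increasing on items `1` and `2`). Ties then have probability zero,
so a bid `x ≥ 0` on item `j` wins with probability `min x (v j) / v j` and earns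
`min x (v j) - x ≤ 0`, with equality when `x ≤ v j`. Hence no strategy earns more than `0`, while
the segment strategy, supported in the box `∏ j, [0, v j]`, earns exactly `0`. It is feasible
because the budget set is convex and contains both endpoints, as `v 1 + v 2 ≤ v 0 ≤ B i`.
-/

open MeasureTheory Set

noncomputable section

/-- Probability that player `i` wins an item of common value `vj` when bidding `xi`
while the opponent bids `xo`: the strictly higher bid wins; on a tie at
`min {B₁, B₂, vj}` the player with the strictly larger `min {Bᵢ, vj}` wins, and all
other ties are fair coins. -/
def winProb3 (B : Fin 2 → ℝ) (vj : ℝ) (i : Fin 2) (xi xo : ℝ) : ℝ :=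
  if xo < xi then 1
  else if xi < xo then 0
  else if xi = min (min (B 0) (B 1)) vj ∧ min (B (1 - i)) vj < min (B i) vj then 1
  else if xi = min (min (B 0) (B 1)) vj ∧ min (B i) vj < min (B (1 - i)) vj then 0
  else 1 / 2

/-- Expected total utility of player `i` from the pure bid vectors `p` (own) and
`q` (opponent) in the three-item auction with common values `v`. -/
def payoff3 (B : Fin 2 → ℝ) (v : Fin 3 → ℝ) (i : Fin 2) (p q : ℝ × ℝ × ℝ) : ℝ :=
  (winProb3 B (v 0) i p.1 q.1 * v 0 - p.1) +
    (winProb3 B (v 1) i p.2.1 q.2.1 * v 1 - p.2.1) +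
    (winProb3 B (v 2) i p.2.2 q.2.2 * v 2 - p.2.2)

/-- Feasible bid vectors of a player with budget `Bi` in the three-item auction. -/
def Feas3 (Bi : ℝ) : Set (ℝ × ℝ × ℝ) :=
  {p | 0 ≤ p.1 ∧ 0 ≤ p.2.1 ∧ 0 ≤ p.2.2 ∧ p.1 + p.2.1 + p.2.2 ≤ Bi}

/-- A mixed strategy with budget `Bi`: a probability measure on the feasible set. -/
def IsStrategy3 (Bi : ℝ) (μ : Measure (ℝ × ℝ × ℝ)) : Prop :=
  IsProbabilityMeasure μ ∧ μ (Feas3 Bi) = 1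

/-- Expected utility of player `i` when he plays `μ` and the opponent plays `ν`. -/
def expUtil3 (B : Fin 2 → ℝ) (v : Fin 3 → ℝ) (i : Fin 2)
    (μ ν : Measure (ℝ × ℝ × ℝ)) : ℝ :=
  ∫ p, (∫ q, payoff3 B v i p q ∂ν) ∂μ

/-- `(F 0, F 1)` is a (mixed) Nash equilibrium of the three-item all-pay auction
with symmetric values. -/
def IsNash3 (B : Fin 2 → ℝ) (v : Fin 3 → ℝ) (F : Fin 2 → Measure (ℝ × ℝ × ℝ)) :
    Prop :=
  (∀ i, IsStrategy3 (B i) (F i)) ∧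
  ∀ i, ∀ μ, IsStrategy3 (B i) μ →
    expUtil3 B v i μ (F (1 - i)) ≤ expUtil3 B v i (F i) (F (1 - i))

/-- The uniform distribution on the segment from `a` to `b` in `ℝ³`: the pushforward
of the uniform distribution on `[0, 1]` under the affine parameterization. -/
def unifSeg3 (a b : ℝ × ℝ × ℝ) : Measure (ℝ × ℝ × ℝ) :=
  Measure.map (fun t : ℝ =>
      ((1 - t) * a.1 + t * b.1,
        (1 - t) * a.2.1 + t * b.2.1,
        (1 - t) * a.2.2 + t * b.2.2))
    (volume.restrict (Icc (0 : ℝ) 1))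

lemma setIntegral_Icc_comp_segment (f : ℝ → ℝ) {a b : ℝ} (hab : a ≠ b) :
    ∫ t in Icc (0 : ℝ) 1, f ((1 - t) * a + t * b) = (b - a)⁻¹ * ∫ y in a..b, f y := by
  have h := intervalIntegral.integral_comp_add_mul f (sub_ne_zero.2 hab.symm) a
    (a := 0) (b := 1)
  rw [integral_Icc_eq_integral_Ioc, ← intervalIntegral.integral_of_le zero_le_one]
  simp only [mul_zero, add_zero, mul_one, add_sub_cancel, smul_eq_mul] at h
  rw [← h]
  congr 1 with t
  ring_nf

section WinProb

variable {B : Fin 2 → ℝ} {vj : ℝ} {i : Fin 2}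

lemma winProb3_of_lt {xi xo : ℝ} (h : xo < xi) : winProb3 B vj i xi xo = 1 := if_pos h

lemma winProb3_of_gt {xi xo : ℝ} (h : xi < xo) : winProb3 B vj i xi xo = 0 := by
  simp [winProb3, h, h.not_gt]

lemma abs_winProb3_le_one (xi xo : ℝ) : |winProb3 B vj i xi xo| ≤ 1 := by
  unfold winProb3
  split_ifs <;> norm_num

@[fun_prop]
lemma measurable_winProb3 (x : ℝ) : Measurable (winProb3 B vj i x) :=
  Measurable.ite (measurableSet_lt measurable_id measurable_const) measurable_const <|
    Measurable.ite (measurableSet_lt measurable_const measurable_id) measurable_const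
      measurable_const

@[fun_prop]
lemma integrable_winProb3_comp {α : Type*} [MeasurableSpace α] {μ : Measure α}
    [IsFiniteMeasure μ] {g : α → ℝ} (hg : Measurable g) (x : ℝ) :
    Integrable (fun a => winProb3 B vj i x (g a)) μ :=
  .of_bound ((measurable_winProb3 x).comp hg).aestronglyMeasurable 1
    (ae_of_all _ fun a => abs_winProb3_le_one x (g a))

lemma winProb3_ae_eq_indicator (x : ℝ) :
    winProb3 B vj i x =ᵐ[volume] (Iic x).indicator 1 := by
  filter_upwards [Measure.ae_ne volume x] with y hy
  rcases hy.lt_or_gt with h | h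
  · simp [winProb3_of_lt h, h.le]
  · simp [winProb3_of_gt h, h.not_ge]

lemma intervalIntegral_winProb3 {a b : ℝ} (hab : a ≤ b) (x : ℝ) :
    ∫ y in a..b, winProb3 B vj i x y = min (max x a) b - a := by
  rw [intervalIntegral.integral_of_le hab,
    integral_congr_ae (ae_restrict_of_ae (winProb3_ae_eq_indicator x)),
    integral_indicator_one measurableSet_Iic, measureReal_restrict_apply measurableSet_Iic,
    inter_comm, Ioc_inter_Iic, Real.volume_real_Ioc]
  grind

lemma setIntegral_winProb3_segment_of_lt {a b : ℝ} (hab : a < b) (x : ℝ) :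
    ∫ t in Icc (0 : ℝ) 1, winProb3 B vj i x ((1 - t) * a + t * b)
      = (min (max x a) b - a) / (b - a) := by
  rw [setIntegral_Icc_comp_segment _ hab.ne, intervalIntegral_winProb3 hab.le, inv_mul_eq_div]

lemma setIntegral_winProb3_segment_of_gt {a b : ℝ} (hba : b < a) (x : ℝ) :
    ∫ t in Icc (0 : ℝ) 1, winProb3 B vj i x ((1 - t) * a + t * b)
      = (min (max x b) a - b) / (a - b) := by
  rw [setIntegral_Icc_comp_segment _ hba.ne', intervalIntegral.integral_symm,
    intervalIntegral_winProb3 hba.le, ← neg_sub a b, inv_neg, neg_mul_neg, inv_mul_eq_div]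

end WinProb

lemma measurableSet_feas3 (Bi : ℝ) : MeasurableSet (Feas3 Bi) := by
  simp only [Feas3, ofPred_and]
  refine (measurableSet_le ?_ ?_).inter ((measurableSet_le ?_ ?_).inter
    ((measurableSet_le ?_ ?_).inter (measurableSet_le ?_ ?_))) <;> fun_prop

lemma convex_feas3 (Bi : ℝ) : Convex ℝ (Feas3 Bi) := by
  rintro p ⟨hp1, hp2, hp3, hp⟩ q ⟨hq1, hq2, hq3, hq⟩ s t hs ht hst
  simp only [Feas3, mem_ofPred_eq, Prod.fst_add, Prod.snd_add, Prod.smul_fst, Prod.smul_snd,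
    smul_eq_mul]
  refine ⟨by positivity, by positivity, by positivity, ?_⟩
  nlinarith [mul_le_mul_of_nonneg_left hp hs, mul_le_mul_of_nonneg_left hq ht]

lemma isStrategy3_iff {Bi : ℝ} {μ : Measure (ℝ × ℝ × ℝ)} :
    IsStrategy3 Bi μ ↔ IsProbabilityMeasure μ ∧ ∀ᵐ p ∂μ, p ∈ Feas3 Bi := by
  refine ⟨fun ⟨hμ, h⟩ => ⟨hμ, ?_⟩, fun ⟨hμ, h⟩ => ⟨hμ, ?_⟩⟩
  · rwa [ae_mem_iff_measure_eq (measurableSet_feas3 Bi).nullMeasurableSet, measure_univ]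
  · rwa [ae_mem_iff_measure_eq (measurableSet_feas3 Bi).nullMeasurableSet, measure_univ] at h

section UnifSeg

variable (a b : ℝ × ℝ × ℝ)

lemma measurable_unifSeg3_param : Measurable (fun t : ℝ =>
      ((1 - t) * a.1 + t * b.1, (1 - t) * a.2.1 + t * b.2.1, (1 - t) * a.2.2 + t * b.2.2)) := by
  fun_prop

instance : IsProbabilityMeasure (unifSeg3 a b) := by
  have : IsProbabilityMeasure (volume.restrict (Icc (0 : ℝ) 1)) :=
    ⟨by simp⟩
  exact Measure.isProbabilityMeasure_map (measurable_unifSeg3_param a b).aemeasurable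

lemma integral_unifSeg3 {f : ℝ × ℝ × ℝ → ℝ} (hf : Measurable f) :
    ∫ q, f q ∂unifSeg3 a b = ∫ t in Icc (0 : ℝ) 1,
      f ((1 - t) * a.1 + t * b.1, (1 - t) * a.2.1 + t * b.2.1, (1 - t) * a.2.2 + t * b.2.2) :=
  integral_map (measurable_unifSeg3_param a b).aemeasurable hf.aestronglyMeasurable

end UnifSeg

lemma ae_unifSeg3_mem {a b : ℝ × ℝ × ℝ} {S : Set (ℝ × ℝ × ℝ)} (hS : Convex ℝ S)
    (hSm : MeasurableSet S) (ha : a ∈ S) (hb : b ∈ S) : ∀ᵐ p ∂unifSeg3 a b, p ∈ S := by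
  refine (ae_map_iff (p := (· ∈ S)) (measurable_unifSeg3_param a b).aemeasurable hSm).2 ?_
  filter_upwards [ae_restrict_mem measurableSet_Icc] with t ⟨h0, h1⟩
  exact hS ha hb (sub_nonneg.2 h1) h0 (sub_add_cancel 1 t)

lemma integral_payoff3 (B : Fin 2 → ℝ) (v : Fin 3 → ℝ) (i : Fin 2) (p : ℝ × ℝ × ℝ)
    (ν : Measure (ℝ × ℝ × ℝ)) [IsProbabilityMeasure ν] :
    ∫ q, payoff3 B v i p q ∂ν =
      ((∫ q, winProb3 B (v 0) i p.1 q.1 ∂ν) * v 0 - p.1) +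
        ((∫ q, winProb3 B (v 1) i p.2.1 q.2.1 ∂ν) * v 1 - p.2.1) +
        ((∫ q, winProb3 B (v 2) i p.2.2 q.2.2 ∂ν) * v 2 - p.2.2) := by
  simp only [payoff3]
  rw [integral_add, integral_add, integral_sub, integral_sub, integral_sub, integral_mul_const,
    integral_mul_const, integral_mul_const]
  · simp
  all_goals fun_prop

/-- Expected utility on an item of value `c` from the bid `x` when the opponent's bid is
uniform on `[0, c]`. -/
def payoffVsUniform (c x : ℝ) : ℝ := min (max x 0) c - x

lemma payoffVsUniform_nonpos (c : ℝ) {x : ℝ} (hx : 0 ≤ x) : payoffVsUniform c x ≤ 0 := by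
  simp [payoffVsUniform, hx]

lemma payoffVsUniform_eq_zero {c x : ℝ} (hx : 0 ≤ x) (hxc : x ≤ c) :
    payoffVsUniform c x = 0 := by
  simp [payoffVsUniform, hx, hxc]

def payoffVsUnifSeg3 (v : Fin 3 → ℝ) (p : ℝ × ℝ × ℝ) : ℝ :=
  payoffVsUniform (v 0) p.1 + payoffVsUniform (v 1) p.2.1 + payoffVsUniform (v 2) p.2.2

lemma integral_payoff3_unifSeg3 (B : Fin 2 → ℝ) {v : Fin 3 → ℝ} (hv : ∀ j, 0 < v j) (i : Fin 2)
    (p : ℝ × ℝ × ℝ) :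
    ∫ q, payoff3 B v i p q ∂unifSeg3 (v 0, 0, 0) (0, v 1, v 2) = payoffVsUnifSeg3 v p := by
  rw [integral_payoff3,
    integral_unifSeg3 (f := fun q => winProb3 B (v 0) i p.1 q.1) _ _ (by fun_prop),
    integral_unifSeg3 (f := fun q => winProb3 B (v 1) i p.2.1 q.2.1) _ _ (by fun_prop),
    integral_unifSeg3 (f := fun q => winProb3 B (v 2) i p.2.2 q.2.2) _ _ (by fun_prop),
    setIntegral_winProb3_segment_of_gt (hv 0), setIntegral_winProb3_segment_of_lt (hv 1),
    setIntegral_winProb3_segment_of_lt (hv 2)]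
  simp only [payoffVsUnifSeg3, payoffVsUniform, sub_zero, div_mul_cancel₀ _ (hv _).ne']

lemma payoffVsUnifSeg3_nonpos (v : Fin 3 → ℝ) {Bi : ℝ} {p : ℝ × ℝ × ℝ} (hp : p ∈ Feas3 Bi) :
    payoffVsUnifSeg3 v p ≤ 0 := by
  obtain ⟨h1, h2, h3, -⟩ := hp
  have := payoffVsUniform_nonpos (v 0) h1
  have := payoffVsUniform_nonpos (v 1) h2
  have := payoffVsUniform_nonpos (v 2) h3
  unfold payoffVsUnifSeg3
  linarith

lemma payoffVsUnifSeg3_eq_zero {v : Fin 3 → ℝ} {p : ℝ × ℝ × ℝ}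
    (hp : p ∈ Icc 0 (v 0, v 1, v 2)) : payoffVsUnifSeg3 v p = 0 := by
  obtain ⟨⟨h1, h2, h3⟩, ⟨h1', h2', h3'⟩⟩ := hp
  simp only [payoffVsUnifSeg3, payoffVsUniform_eq_zero h1 h1', payoffVsUniform_eq_zero h2 h2',
    payoffVsUniform_eq_zero h3 h3', add_zero]

lemma expUtil3_unifSeg3 (B : Fin 2 → ℝ) {v : Fin 3 → ℝ} (hv : ∀ j, 0 < v j) (i : Fin 2)
    (μ : Measure (ℝ × ℝ × ℝ)) :
    expUtil3 B v i μ (unifSeg3 (v 0, 0, 0) (0, v 1, v 2)) = ∫ p, payoffVsUnifSeg3 v p ∂μ := by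
  simp only [expUtil3, integral_payoff3_unifSeg3 B hv]

theorem nash_three_items_case2_general (B : Fin 2 → ℝ) (v : Fin 3 → ℝ)
    (hv3 : 0 < v 2) (hv23 : v 2 ≤ v 1)
    (hB : ∀ i, max ((v 0 + v 1 + v 2) / 2) (v 0) ≤ B i)
    (hz : (v 0 + v 1 + v 2) / 2 ≤ v 0) :
    IsNash3 B v (fun _ =>
      unifSeg3 (v 0, 0, 0) (0, v 1, v 2)) := by
  have hv : ∀ j, 0 < v j := by
    intro j
    fin_cases j <;> dsimp <;> linarith
  have hv0B : ∀ i, v 0 ≤ B i := fun i => (le_max_right _ _).trans (hB i)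
  have hfeas : ∀ i, IsStrategy3 (B i) (unifSeg3 (v 0, 0, 0) (0, v 1, v 2)) := fun i =>
    isStrategy3_iff.2 ⟨inferInstance, ae_unifSeg3_mem (convex_feas3 _)
      (measurableSet_feas3 _) ⟨(hv 0).le, le_rfl, le_rfl, by simp [hv0B i]⟩
      ⟨le_rfl, (hv 1).le, (hv 2).le, by dsimp; linarith [hv0B i]⟩⟩
  refine ⟨hfeas, fun i μ hμ => ?_⟩
  have hbox : ∀ᵐ p ∂unifSeg3 (v 0, 0, 0) (0, v 1, v 2), p ∈ Icc 0 (v 0, v 1, v 2) :=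
    ae_unifSeg3_mem (convex_Icc _ _) measurableSet_Icc
      ⟨⟨(hv 0).le, le_rfl, le_rfl⟩, le_rfl, (hv 1).le, (hv 2).le⟩
      ⟨⟨le_rfl, (hv 1).le, (hv 2).le⟩, (hv 0).le, le_rfl, le_rfl⟩
  simp only [expUtil3_unifSeg3 B hv,
    integral_eq_zero_of_ae (hbox.mono fun _ => payoffVsUnifSeg3_eq_zero)]
  exact integral_nonpos_of_ae ((isStrategy3_iff.1 hμ).2.mono fun p hp =>
    payoffVsUnifSeg3_nonpos v hp)

/-- Three items with common values `v₁ ≥ v₂ ≥ v₃ > 0` and large budgets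
(`Bᵢ ≥ max {(v₁+v₂+v₃)/2, v₁}`), in the case `(v₁+v₂+v₃)/2 ≤ v₁`: both players
playing the uniform distribution on the segment from `A = (v₁, 0, 0)` to
`B = (0, v₂, v₃)` is a Nash equilibrium. -/
theorem nash_three_items_case2 (B : Fin 2 → ℝ) (v : Fin 3 → ℝ)
    (hv3 : 0 < v 2) (hv23 : v 2 ≤ v 1) (hv12 : v 1 ≤ v 0)
    (hB : ∀ i, max ((v 0 + v 1 + v 2) / 2) (v 0) ≤ B i)
    (hz : (v 0 + v 1 + v 2) / 2 ≤ v 0) :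
    IsNash3 B v (fun _ =>
      unifSeg3 (v 0, 0, 0) (0, v 1, v 2)) :=
  nash_three_items_case2_general B v hv3 hv23 hB hz
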